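/- If a joint probability distribution P on a finite product space Ω₁ × ⋯ × Ωₙ factorizes as P(x₁,…,xₙ) = ∏ⱼ P(xⱼ | pa(xⱼ)) according to a directed acyclic graph G (where pa(xⱼ) denotes the values of the parents of Xⱼ in G), then P satisfies the Markov condition relative to G: each variable Xⱼ is conditionally independent of its non-descendants (other than itself) given its parents. -/

import Mathlib

attribute [local instance] Classical.propDecidable

/-- Marginal "probability" of agreeing with `y` on the coordinates in `S`. -/
noncomputable def margin {n : ℕ} {Ω : Fin n → Type*} [∀ i, Fintype (Ω i)]
    (P : (∀ i, Ω i) → ℝ) (S : Finset (Fin n)) (y : ∀ i, Ω i) : ℝ :=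
  ∑ x : ∀ i, Ω i, if ∀ i ∈ S, x i = y i then P x else 0

/-- Conditional independence of the variables in `A` and in `B` given those in `C`,
in multiplicative (division-free) form. -/
def CondIndep {n : ℕ} {Ω : Fin n → Type*} [∀ i, Fintype (Ω i)]
    (P : (∀ i, Ω i) → ℝ) (A B C : Finset (Fin n)) : Prop :=
  ∀ y : ∀ i, Ω i,
    margin P (A ∪ B ∪ C) y * margin P C y = margin P (A ∪ C) y * margin P (B ∪ C) y

/-- `k` is a (possibly indirect) descendant of `j` in the DAG given by parent sets `pa`. -/
def Desc {n : ℕ} (pa : Fin n → Finset (Fin n)) (j k : Fin n) : Prop :=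
  Relation.ReflTransGen (fun a b => a ∈ pa b) j k

/-- The Markov condition: each variable is conditionally independent of its
non-descendants (other than itself and its parents) given its parents. -/
def MarkovCondition {n : ℕ} {Ω : Fin n → Type*} [∀ i, Fintype (Ω i)]
    (pa : Fin n → Finset (Fin n)) (P : (∀ i, Ω i) → ℝ) : Prop :=
  ∀ j : Fin n,
    CondIndep P {j}
      (Finset.univ.filter fun k => ¬ Desc pa j k ∧ k ∉ pa j ∧ k ≠ j)
      (pa j)

/-- `P` factorizes according to the DAG with parent sets `pa`:
`P x = ∏ j, P(x_j | parents)`, where the `j`-th factor `q j` depends only on the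
coordinates in `pa j ∪ {j}`, is nonnegative and is normalized over `x_j`. -/
def Factorizes {n : ℕ} {Ω : Fin n → Type*} [∀ i, Fintype (Ω i)]
    (pa : Fin n → Finset (Fin n)) (P : (∀ i, Ω i) → ℝ) : Prop :=
  ∃ q : ∀ _ : Fin n, (∀ i, Ω i) → ℝ,
    (∀ j, ∀ x y : ∀ i, Ω i, (∀ i ∈ insert j (pa j), x i = y i) → q j x = q j y) ∧
    (∀ j x, 0 ≤ q j x) ∧
    (∀ j, ∀ x : ∀ i, Ω i, ∑ a : Ω j, q j (Function.update x j a) = 1) ∧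
    (∀ x, P x = ∏ j, q j x)


section AuxiliaryLemmas

variable {n : ℕ} {Ω : Fin n → Type*} [∀ i, Fintype (Ω i)]

private lemma sum_ite_update (f : (∀ i, Ω i) → ℝ) (k : Fin n) (a a₀ : Ω k) :
    (∑ x : ∀ i, Ω i, if x k = a₀ then f (Function.update x k a) else 0)
      = ∑ x : ∀ i, Ω i, if x k = a then f x else 0 := by
  classical
  have hkk : ∀ (x : ∀ i, Ω i) (v : Ω k), Function.update x k v k = v := by
    intro x v; simp
  apply Fintype.sum_bijective (fun x => Function.update x k (Equiv.swap a a₀ (x k)))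
  · apply Function.Involutive.bijective
    intro x
    funext i
    by_cases hik : i = k
    · subst hik; simp
    · simp [Function.update_of_ne hik]
  · intro x
    have hcond : (Function.update x k (Equiv.swap a a₀ (x k)) k = a) ↔ x k = a₀ := by
      rw [hkk, Equiv.apply_eq_iff_eq_symm_apply]
      simp
    by_cases hx : x k = a₀
    · rw [if_pos hx, if_pos (hcond.mpr hx)]
      congr 1
      funext i
      by_cases hik : i = k
      · subst hik; simp [hx]
      · simp [Function.update_of_ne hik]
    · rw [if_neg hx, if_neg (fun h => hx (hcond.mp h))]

private lemma sum_pin (f : (∀ i, Ω i) → ℝ) (k : Fin n) (a₀ : Ω k) :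
    ∑ x : ∀ i, Ω i, f x
      = ∑ x : ∀ i, Ω i, if x k = a₀ then ∑ a : Ω k, f (Function.update x k a) else 0 := by
  classical
  have h1 : ∀ x : ∀ i, Ω i, (if x k = a₀ then ∑ a : Ω k, f (Function.update x k a) else 0)
      = ∑ a : Ω k, if x k = a₀ then f (Function.update x k a) else 0 := by
    intro x; split <;> simp
  simp_rw [h1]
  rw [Finset.sum_comm]
  have h2 : ∀ a : Ω k, (∑ x : ∀ i, Ω i, if x k = a₀ then f (Function.update x k a) else 0)
      = ∑ x : ∀ i, Ω i, if x k = a then f x else 0 := fun a => sum_ite_update f k a a₀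
  simp_rw [h2]
  rw [Finset.sum_comm]
  apply Finset.sum_congr rfl
  intro x _
  simp

private lemma margin_erase {F G g : (∀ i, Ω i) → ℝ} {k : Fin n} {S : Finset (Fin n)}
    (hk : k ∉ S)
    (hF : ∀ x, F x = g x * G x)
    (hG : ∀ x a, G (Function.update x k a) = G x)
    (hg : ∀ x, ∑ a : Ω k, g (Function.update x k a) = 1)
    (y : ∀ i, Ω i) : margin F S y = margin G (insert k S) y := by
  classical
  rw [margin, sum_pin (fun x => if ∀ i ∈ S, x i = y i then F x else 0) k (y k), margin]
  apply Finset.sum_congr rfl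
  intro x _
  have hcond : ∀ a : Ω k, (∀ i ∈ S, Function.update x k a i = y i) ↔ (∀ i ∈ S, x i = y i) := by
    intro a
    constructor <;> intro h i hi <;>
      [skip; skip] <;>
      · have hik : i ≠ k := fun h' => hk (h' ▸ hi)
        have := h i hi
        simpa [Function.update_of_ne hik] using this
  have hinner : (∑ a : Ω k, if ∀ i ∈ S, Function.update x k a i = y i
        then F (Function.update x k a) else 0)
      = if ∀ i ∈ S, x i = y i then G x else 0 := by
    by_cases hc : ∀ i ∈ S, x i = y i
    · rw [if_pos hc]
      have : ∀ a : Ω k, (if ∀ i ∈ S, Function.update x k a i = y i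
            then F (Function.update x k a) else 0)
          = g (Function.update x k a) * G x := by
        intro a
        rw [if_pos ((hcond a).mpr hc), hF, hG]
      simp_rw [this, ← Finset.sum_mul, hg, one_mul]
    · rw [if_neg hc]
      apply Finset.sum_eq_zero
      intro a _
      rw [if_neg (fun h => hc ((hcond a).mp h))]
  rw [hinner]
  by_cases hxk : x k = y k
  · rw [if_pos hxk]
    by_cases hc : ∀ i ∈ S, x i = y i
    · rw [if_pos hc, if_pos]
      intro i hi
      rcases Finset.mem_insert.mp hi with h | h
      · exact h ▸ hxk
      · exact hc i h
    · rw [if_neg hc, if_neg]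
      intro h
      exact hc fun i hi => h i (Finset.mem_insert_of_mem hi)
  · rw [if_neg hxk, if_neg]
    intro h
    exact hxk (h k (Finset.mem_insert_self k S))

private lemma margin_split (F : (∀ i, Ω i) → ℝ) {k : Fin n} {S : Finset (Fin n)} (hk : k ∉ S)
    (y : ∀ i, Ω i) :
    margin F S y = ∑ a : Ω k, margin F (insert k S) (Function.update y k a) := by
  classical
  rw [margin]
  simp_rw [margin]
  rw [Finset.sum_comm]
  apply Finset.sum_congr rfl
  intro x _
  have hcond : ∀ a : Ω k, (∀ i ∈ insert k S, x i = Function.update y k a i)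
      ↔ (x k = a ∧ ∀ i ∈ S, x i = y i) := by
    intro a
    constructor
    · intro h
      refine ⟨by simpa using h k (Finset.mem_insert_self k S), fun i hi => ?_⟩
      have hik : i ≠ k := fun h' => hk (h' ▸ hi)
      simpa [Function.update_of_ne hik] using h i (Finset.mem_insert_of_mem hi)
    · rintro ⟨h1, h2⟩ i hi
      rcases Finset.mem_insert.mp hi with h | h
      · subst h; simpa using h1
      · have hik : i ≠ k := fun h' => hk (h' ▸ h)
        rw [Function.update_of_ne hik]
        exact h2 i h
  by_cases hc : ∀ i ∈ S, x i = y i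
  · rw [if_pos hc]
    have : ∀ a : Ω k, (if ∀ i ∈ insert k S, x i = Function.update y k a i then F x else 0)
        = if x k = a then F x else 0 := by
      intro a
      by_cases h : x k = a
      · rw [if_pos h, if_pos ((hcond a).mpr ⟨h, hc⟩)]
      · rw [if_neg h, if_neg (fun h' => h ((hcond a).mp h').1)]
    simp_rw [this]
    simp
  · rw [if_neg hc]
    symm
    apply Finset.sum_eq_zero
    intro a _
    rw [if_neg (fun h => hc ((hcond a).mp h).2)]

private lemma margin_univ (F : (∀ i, Ω i) → ℝ) (y : ∀ i, Ω i) :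
    margin F Finset.univ y = F y := by
  classical
  rw [margin]
  have : ∀ x : ∀ i, Ω i, (if ∀ i ∈ Finset.univ, x i = y i then F x else 0)
      = if x = y then F x else 0 := by
    intro x
    congr 1
    simp [funext_iff]
  simp_rw [this]
  simp

private lemma margin_update_indep {F : (∀ i, Ω i) → ℝ} {j : Fin n} {S : Finset (Fin n)}
    (hj : j ∈ S)
    (hF : ∀ x a, F (Function.update x j a) = F x) (y : ∀ i, Ω i) (a : Ω j) :
    margin F S (Function.update y j a) = margin F S y := by
  classical
  rw [margin, margin]
  apply Fintype.sum_bijective (fun x => Function.update x j (Equiv.swap a (y j) (x j)))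
  · apply Function.Involutive.bijective
    intro x
    funext i
    by_cases hik : i = j
    · subst hik; simp
    · simp [Function.update_of_ne hik]
  · intro x
    set σx := Function.update x j (Equiv.swap a (y j) (x j)) with hσ
    have hσk : σx j = Equiv.swap a (y j) (x j) := by simp [hσ]
    have hσi : ∀ i, i ≠ j → σx i = x i := by
      intro i h; simp [hσ, Function.update_of_ne h]
    have hcond : (∀ i ∈ S, x i = Function.update y j a i) ↔ (∀ i ∈ S, σx i = y i) := by
      constructor
      · intro h i hi
        by_cases hij : i = j
        · subst hij
          have := h i hi
          rw [Function.update_self] at this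
          rw [hσk, this, Equiv.swap_apply_left]
        · rw [hσi i hij]
          have := h i hi
          rwa [Function.update_of_ne hij] at this
      · intro h i hi
        by_cases hij : i = j
        · subst hij
          have := h i hi
          rw [hσk] at this
          rw [Function.update_self]
          rw [Equiv.apply_eq_iff_eq_symm_apply] at this
          simpa using this
        · rw [Function.update_of_ne hij, ← hσi i hij]
          exact h i hi
    have hFσ : F σx = F x := hF x _
    by_cases hc : ∀ i ∈ S, x i = Function.update y j a i
    · rw [if_pos hc, if_pos (hcond.mp hc), hFσ]
    · rw [if_neg hc, if_neg (fun h => hc (hcond.mpr h))]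

private lemma margin_peel (pa : Fin n → Finset (Fin n))
    (hacyc : ∀ j : Fin n, ∀ i ∈ pa j, i < j)
    (q : ∀ _ : Fin n, (∀ i, Ω i) → ℝ)
    (hdep : ∀ j, ∀ x y : ∀ i, Ω i, (∀ i ∈ insert j (pa j), x i = y i) → q j x = q j y)
    (hnorm : ∀ j, ∀ x : ∀ i, Ω i, ∑ a : Ω j, q j (Function.update x j a) = 1)
    (R : Finset (Fin n)) :
    ∀ (W S : Finset (Fin n)), Disjoint W R → Disjoint R S →
      (∀ k ∈ R, ∀ m ∈ W, k ∉ insert m (pa m)) → ∀ y,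
      margin (fun x => ∏ m ∈ W ∪ R, q m x) S y
        = margin (fun x => ∏ m ∈ W, q m x) (S ∪ R) y := by
  classical
  induction R using Finset.induction_on_max with
  | empty => intro W S _ _ _ y; simp
  | insert k R' hmax ih =>
    intro W S hWR hRS hblock y
    have hkR' : k ∉ R' := fun h => lt_irrefl k (hmax k h)
    have hkW : k ∉ W := fun h =>
      (Finset.disjoint_left.mp hWR h) (Finset.mem_insert_self k R')
    have hkS : k ∉ S := fun h =>
      (Finset.disjoint_left.mp hRS (Finset.mem_insert_self k R')) h
    have hkWR' : k ∉ W ∪ R' := by simp [hkW, hkR']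
    have hprod : ∀ x : ∀ i, Ω i,
        (∏ m ∈ W ∪ insert k R', q m x) = q k x * ∏ m ∈ W ∪ R', q m x := by
      intro x
      rw [Finset.union_insert, Finset.prod_insert hkWR']
    have hG : ∀ (x : ∀ i, Ω i) (a : Ω k),
        (∏ m ∈ W ∪ R', q m (Function.update x k a)) = ∏ m ∈ W ∪ R', q m x := by
      intro x a
      apply Finset.prod_congr rfl
      intro m hm
      have hkm : k ∉ insert m (pa m) := by
        rcases Finset.mem_union.mp hm with h | h
        · exact hblock k (Finset.mem_insert_self k R') m h
        · intro hmem
          rcases Finset.mem_insert.mp hmem with h' | h'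
          · exact hkR' (h' ▸ h)
          · exact lt_irrefl k (lt_trans (hacyc m k h') (hmax m h))
      apply hdep
      intro i hi
      have : i ≠ k := fun h' => hkm (h' ▸ hi)
      rw [Function.update_of_ne this]
    have step1 : margin (fun x => ∏ m ∈ W ∪ insert k R', q m x) S y
        = margin (fun x => ∏ m ∈ W ∪ R', q m x) (insert k S) y :=
      margin_erase hkS hprod hG (hnorm k) y
    rw [step1]
    have hRS' : Disjoint R' (insert k S) := by
      rw [Finset.disjoint_insert_right]
      exact ⟨hkR', Finset.disjoint_of_subset_left (Finset.subset_insert k R') hRS⟩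
    have hWR' : Disjoint W R' :=
      Finset.disjoint_of_subset_right (Finset.subset_insert k R') hWR
    have hblock' : ∀ k' ∈ R', ∀ m ∈ W, k' ∉ insert m (pa m) := fun k' h =>
      hblock k' (Finset.mem_insert_of_mem h)
    rw [ih W (insert k S) hWR' hRS' hblock' y]
    congr 1
    rw [Finset.insert_union, Finset.union_insert]

private lemma desc_le {pa : Fin n → Finset (Fin n)}
    (hacyc : ∀ j : Fin n, ∀ i ∈ pa j, i < j)
    {j k : Fin n} (h : Desc pa j k) : j ≤ k := by
  induction h with
  | refl => exact le_refl _
  | tail h₁ h₂ ih => exact le_trans ih (le_of_lt (hacyc _ _ h₂))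

variable (pa : Fin n → Finset (Fin n)) (hacyc : ∀ j : Fin n, ∀ i ∈ pa j, i < j)
    (q : ∀ _ : Fin n, (∀ i, Ω i) → ℝ)
    (hdep : ∀ j, ∀ x y : ∀ i, Ω i, (∀ i ∈ insert j (pa j), x i = y i) → q j x = q j y)
    (hnorm : ∀ j, ∀ x : ∀ i, Ω i, ∑ a : Ω j, q j (Function.update x j a) = 1)

include hacyc hdep hnorm

private lemma margin_ancestral (S₀ : Finset (Fin n)) (hanc : ∀ m ∈ S₀, pa m ⊆ S₀)
    (y : ∀ i, Ω i) :
    margin (fun x => ∏ m, q m x) S₀ y = ∏ m ∈ S₀, q m y := by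
  classical
  have hblock : ∀ k ∈ S₀ᶜ, ∀ m ∈ S₀, k ∉ insert m (pa m) := by
    intro k hk m hm hmem
    have hk' : k ∉ S₀ := Finset.mem_compl.mp hk
    rcases Finset.mem_insert.mp hmem with h | h
    · exact hk' (h ▸ hm)
    · exact hk' (hanc m hm h)
  have := margin_peel pa hacyc q hdep hnorm S₀ᶜ S₀ S₀
    disjoint_compl_right disjoint_compl_left hblock y
  rw [Finset.union_compl] at this
  rw [this, margin_univ]

private lemma margin_parents (j : Fin n) (y : ∀ i, Ω i) :
    margin (fun x => ∏ m, q m x) (insert j (pa j)) y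
      = q j y * margin (fun x => ∏ m, q m x) (pa j) y := by
  classical
  set T := insert j (pa j) with hT
  set Q : (∀ i, Ω i) → ℝ := fun x => ∏ m ∈ Finset.univ.erase j, q m x with hQ
  have haux : ∀ y' : ∀ i, Ω i,
      margin (fun x => ∏ m, q m x) T y' = q j y' * margin Q T y' := by
    intro y'
    rw [margin, margin, Finset.mul_sum]
    apply Finset.sum_congr rfl
    intro x _
    by_cases hc : ∀ i ∈ T, x i = y' i
    · rw [if_pos hc, if_pos hc]
      have h1 : (∏ m, q m x) = q j x * Q x := by
        rw [hQ]
        exact (Finset.mul_prod_erase Finset.univ (fun m => q m x) (Finset.mem_univ j)).symm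
      rw [h1, hdep j x y' hc]
    · rw [if_neg hc, if_neg hc, mul_zero]
  set A : Finset (Fin n) := Finset.univ.filter (fun k => ∃ t ∈ T, Desc pa k t) with hA
  have hTA : T ⊆ A := by
    intro t ht
    exact Finset.mem_filter.mpr ⟨Finset.mem_univ t, ⟨t, ht, Relation.ReflTransGen.refl⟩⟩
  have hjA : j ∈ A := hTA (Finset.mem_insert_self j (pa j))
  have hWR : A.erase j ∪ Aᶜ = Finset.univ.erase j := by
    ext k
    simp only [Finset.mem_union, Finset.mem_erase, Finset.mem_compl, Finset.mem_univ,
      and_true]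
    constructor
    · rintro (⟨hkj, _⟩ | h)
      · exact hkj
      · exact fun h' => h (h' ▸ hjA)
    · intro hkj
      by_cases hk : k ∈ A
      · exact Or.inl ⟨hkj, hk⟩
      · exact Or.inr hk
  have hblock : ∀ k ∈ Aᶜ, ∀ m ∈ A.erase j, k ∉ insert m (pa m) := by
    intro k hk m hm hmem
    have hk' : k ∉ A := Finset.mem_compl.mp hk
    have hmA : m ∈ A := (Finset.mem_erase.mp hm).2
    rcases Finset.mem_insert.mp hmem with h | h
    · exact hk' (h ▸ hmA)
    · obtain ⟨-, t, ht, hd⟩ := Finset.mem_filter.mp hmA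
      exact hk' (Finset.mem_filter.mpr ⟨Finset.mem_univ k,
        ⟨t, ht, Relation.ReflTransGen.head h hd⟩⟩)
  have hdisj1 : Disjoint (A.erase j) Aᶜ :=
    Finset.disjoint_of_subset_left (Finset.erase_subset j A) disjoint_compl_right
  have hdisj2 : Disjoint Aᶜ T := by
    rw [Finset.disjoint_right]
    intro t ht
    simpa using hTA ht
  have hpeel : ∀ y' : ∀ i, Ω i, margin Q T y'
      = margin (fun x => ∏ m ∈ A.erase j, q m x) (T ∪ Aᶜ) y' := by
    intro y'
    have := margin_peel pa hacyc q hdep hnorm Aᶜ (A.erase j) T hdisj1 hdisj2 hblock y'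
    rw [hWR] at this
    exact this
  have hFindep : ∀ (x : ∀ i, Ω i) (a : Ω j),
      (∏ m ∈ A.erase j, q m (Function.update x j a)) = ∏ m ∈ A.erase j, q m x := by
    intro x a
    apply Finset.prod_congr rfl
    intro m hm
    obtain ⟨hmj, hmA⟩ := Finset.mem_erase.mp hm
    have hjm : j ∉ insert m (pa m) := by
      intro hmem
      rcases Finset.mem_insert.mp hmem with h | h
      · exact hmj h.symm
      · have hjlt : j < m := hacyc m j h
        obtain ⟨-, t, ht, hd⟩ := Finset.mem_filter.mp hmA
        have hmt : m ≤ t := desc_le hacyc hd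
        rcases Finset.mem_insert.mp ht with h' | h'
        · exact absurd (h' ▸ hmt) (not_le.mpr hjlt)
        · exact absurd (le_trans hmt (le_of_lt (hacyc j t h'))) (not_le.mpr hjlt)
    apply hdep
    intro i hi
    have : i ≠ j := fun h' => hjm (h' ▸ hi)
    rw [Function.update_of_ne this]
  have hZ : ∀ (y' : ∀ i, Ω i) (a : Ω j),
      margin Q T (Function.update y' j a) = margin Q T y' := by
    intro y' a
    rw [hpeel, hpeel]
    exact margin_update_indep
      (Finset.mem_union_left _ (Finset.mem_insert_self j (pa j))) hFindep y' a
  have hjpa : j ∉ pa j := fun h => lt_irrefl j (hacyc j j h)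
  have hsplit := margin_split (Ω := Ω) (fun x => ∏ m, q m x) hjpa y
  rw [← hT] at hsplit
  have hterm : ∀ a : Ω j, margin (fun x => ∏ m, q m x) T (Function.update y j a)
      = q j (Function.update y j a) * margin Q T y := by
    intro a
    rw [haux, hZ]
  rw [hsplit]
  simp_rw [hterm]
  rw [← Finset.sum_mul, hnorm j y, one_mul, haux]

end AuxiliaryLemmas

/-- If a joint distribution on a finite product space factorizes
according to a DAG `G`, then it satisfies the Markov condition relative to `G`. -/
theorem factorization_implies_markov {n : ℕ} {Ω : Fin n → Type*} [∀ i, Fintype (Ω i)]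
    (pa : Fin n → Finset (Fin n)) (hacyc : ∀ j : Fin n, ∀ i ∈ pa j, i < j)
    (P : (∀ i, Ω i) → ℝ) (hP0 : ∀ x, 0 ≤ P x) (hP1 : ∑ x : ∀ i, Ω i, P x = 1)
    (hfac : Factorizes pa P) :
    MarkovCondition pa P := by
  classical
  obtain ⟨q, hdep, hq0, hnorm, hPq⟩ := hfac
  have hP : P = fun x => ∏ m, q m x := funext hPq
  subst hP
  intro j y
  set B : Finset (Fin n) :=
    Finset.univ.filter (fun k => ¬ Desc pa j k ∧ k ∉ pa j ∧ k ≠ j) with hB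
  set N : Finset (Fin n) := Finset.univ.filter (fun k => ¬ Desc pa j k) with hN
  have hpaN : ∀ i ∈ pa j, i ∈ N := by
    intro i hi
    refine Finset.mem_filter.mpr ⟨Finset.mem_univ i, fun hd => ?_⟩
    exact absurd (desc_le hacyc hd) (not_le.mpr (hacyc j i hi))
  have hjN : j ∉ N := by
    intro h
    exact (Finset.mem_filter.mp h).2 Relation.ReflTransGen.refl
  have hBC : B ∪ pa j = N := by
    ext k
    simp only [hB, hN, Finset.mem_union, Finset.mem_filter, Finset.mem_univ, true_and]
    constructor
    · rintro (⟨h1, -, -⟩ | h)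
      · exact h1
      · exact (Finset.mem_filter.mp (hpaN k h)).2
    · intro h
      by_cases hk : k ∈ pa j
      · exact Or.inr hk
      · exact Or.inl ⟨h, hk, fun h' => h (h' ▸ Relation.ReflTransGen.refl)⟩
  have hABC : {j} ∪ B ∪ pa j = insert j N := by
    rw [Finset.union_assoc, hBC]
    ext k
    simp [Finset.mem_insert]
  have hAC : ({j} : Finset (Fin n)) ∪ pa j = insert j (pa j) := by
    ext k; simp [Finset.mem_insert]
  have hNanc : ∀ m ∈ N, pa m ⊆ N := by
    intro m hm i hi
    refine Finset.mem_filter.mpr ⟨Finset.mem_univ i, fun hd => ?_⟩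
    exact (Finset.mem_filter.mp hm).2 (Relation.ReflTransGen.tail hd hi)
  have hN'anc : ∀ m ∈ insert j N, pa m ⊆ insert j N := by
    intro m hm i hi
    rcases Finset.mem_insert.mp hm with h | h
    · subst h
      exact Finset.mem_insert_of_mem (hpaN i hi)
    · exact Finset.mem_insert_of_mem (hNanc m h hi)
  have h1 := margin_ancestral pa hacyc q hdep hnorm N hNanc y
  have h2 := margin_ancestral pa hacyc q hdep hnorm (insert j N) hN'anc y
  have h3 := margin_parents pa hacyc q hdep hnorm j y
  rw [hABC, hAC, hBC, h1, h2, h3, Finset.prod_insert hjN]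
  ring
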